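/- arXiv:1909.03964 — 2 statements merged into one kernel-verified Lean document; each statement's English description precedes it below -/
import Mathlib

section
/- Let K be a field and C the infinite clock graph. Then the corner v L_K(C) v equals the K-linear span of the set {v} ∪ {eₙeₙ* : n ∈ ℕ} inside L_K(C). -/
/-- A directed graph: vertices, edges, source and range maps. -/
structure DirGraph where
  V : Type
  E : Type
  src : E → V
  rng : E → V

namespace DirGraph

/-- Generators of the Leavitt path algebra: vertices, edges, and ghost edges. -/
inductive LGen (G : DirGraph) : Type
  | vertex : G.V → LGen G
  | edge : G.E → LGen G
  | ghost : G.E → LGen G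

variable (K : Type) [Field K]

/-- The free unital associative `K`-algebra on the Leavitt generators. -/
abbrev FA (G : DirGraph) : Type := FreeAlgebra K (LGen G)

/-- The generator corresponding to a vertex. -/
noncomputable def fv (G : DirGraph) (v : G.V) : FA K G := FreeAlgebra.ι K (LGen.vertex v)

/-- The generator corresponding to an edge. -/
noncomputable def fe (G : DirGraph) (e : G.E) : FA K G := FreeAlgebra.ι K (LGen.edge e)

/-- The generator corresponding to a ghost edge. -/
noncomputable def fg (G : DirGraph) (e : G.E) : FA K G := FreeAlgebra.ι K (LGen.ghost e)

/-- The defining relations of the Leavitt path algebra of `G` over `K`. -/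
inductive LeavittRel (G : DirGraph) : FA K G → FA K G → Prop
  | vertex_same (v : G.V) : LeavittRel G (fv K G v * fv K G v) (fv K G v)
  | vertex_ne (v w : G.V) (h : v ≠ w) : LeavittRel G (fv K G v * fv K G w) 0
  | src_edge (e : G.E) : LeavittRel G (fv K G (G.src e) * fe K G e) (fe K G e)
  | edge_rng (e : G.E) : LeavittRel G (fe K G e * fv K G (G.rng e)) (fe K G e)
  | rng_ghost (e : G.E) : LeavittRel G (fv K G (G.rng e) * fg K G e) (fg K G e)
  | ghost_src (e : G.E) : LeavittRel G (fg K G e * fv K G (G.src e)) (fg K G e)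
  | ghost_edge_same (e : G.E) : LeavittRel G (fg K G e * fe K G e) (fv K G (G.rng e))
  | ghost_edge_ne (e f : G.E) (h : e ≠ f) : LeavittRel G (fg K G e * fe K G f) 0
  | ck (v : G.V) (hfin : {e : G.E | G.src e = v}.Finite)
      (hne : {e : G.E | G.src e = v}.Nonempty) :
      LeavittRel G (fv K G v) (∑ e ∈ hfin.toFinset, fe K G e * fg K G e)

/-- The quotient of the free unital `K`-algebra on the generators by the Leavitt
relations.  The Leavitt path algebra `L_K(G)` is the non-unital subalgebra of `LPA K G`
generated by the images of the generators (see `LSub`). -/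
abbrev LPA (G : DirGraph) : Type := RingQuot (LeavittRel K G)

/-- The image of a vertex in `LPA K G`. -/
noncomputable def Lv (G : DirGraph) (v : G.V) : LPA K G :=
  RingQuot.mkAlgHom K (LeavittRel K G) (fv K G v)

/-- The image of an edge in `LPA K G`. -/
noncomputable def Le (G : DirGraph) (e : G.E) : LPA K G :=
  RingQuot.mkAlgHom K (LeavittRel K G) (fe K G e)

/-- The image of a ghost edge in `LPA K G`. -/
noncomputable def Lg (G : DirGraph) (e : G.E) : LPA K G :=
  RingQuot.mkAlgHom K (LeavittRel K G) (fg K G e)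

/-- The Leavitt path algebra `L_K(G)`: the (possibly non-unital) subalgebra of `LPA K G`
generated by the images of the generators. -/
noncomputable def LSub (G : DirGraph) : NonUnitalSubalgebra K (LPA K G) :=
  NonUnitalAlgebra.adjoin K
    (Set.range (Lv K G) ∪ Set.range (Le K G) ∪ Set.range (Lg K G))

theorem Lv_mem (G : DirGraph) (v : G.V) : Lv K G v ∈ LSub K G :=
  NonUnitalAlgebra.subset_adjoin K (Or.inl (Or.inl ⟨v, rfl⟩))

theorem Le_mem (G : DirGraph) (e : G.E) : Le K G e ∈ LSub K G :=
  NonUnitalAlgebra.subset_adjoin K (Or.inl (Or.inr ⟨e, rfl⟩))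

theorem Lg_mem (G : DirGraph) (e : G.E) : Lg K G e ∈ LSub K G :=
  NonUnitalAlgebra.subset_adjoin K (Or.inr ⟨e, rfl⟩)

end DirGraph

namespace DirGraph

/-- The infinite clock graph: one central vertex `none`, vertices `some n`, and for each
`n : ℕ` an edge `n` from `none` to `some n`. -/
def Clock : DirGraph where
  V := Option ℕ
  E := ℕ
  src := fun _ => none
  rng := fun n => some n

end DirGraph

open DirGraph

/-! The span `Q` of `v`, the `eₙ*` and the `eₙeₙ*` is stable under left multiplication by every
generator of `L_K(C)`, hence is a left ideal containing `v`, so `x v ∈ Q` for every `x`. Since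
`v eₙ* = 0`, multiplying `Q` on the left by `v` lands in the span of `v` and the `eₙeₙ*`; conversely
`v` fixes this span on both sides, as `v eₙ = eₙ` and `eₙ* v = eₙ*`. -/

namespace RingQuot

theorem mul_mem_of_forall_ι_mul_mem {R X : Type*} [CommSemiring R]
    {r : FreeAlgebra R X → FreeAlgebra R X → Prop} (S : Submodule R (RingQuot r))
    (h : ∀ a, ∀ q ∈ S, mkAlgHom R r (FreeAlgebra.ι R a) * q ∈ S) (x : RingQuot r) :
    ∀ q ∈ S, x * q ∈ S := by
  obtain ⟨y, rfl⟩ := mkAlgHom_surjective R r x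
  induction y using FreeAlgebra.induction with
  | grade0 c =>
    intro q hq
    rw [AlgHom.commutes, Algebra.algebraMap_eq_smul_one, smul_one_mul]
    exact S.smul_mem c hq
  | grade1 a => exact h a
  | mul a b ha hb =>
    intro q hq
    rw [map_mul, mul_assoc]
    exact ha _ (hb _ hq)
  | add a b ha hb =>
    intro q hq
    rw [map_add, add_mul]
    exact S.add_mem (ha _ hq) (hb _ hq)

end RingQuot

theorem Submodule.mul_mem_of_forall_mul_mem_of_mem_span {R A : Type*} [CommSemiring R]
    [Semiring A] [Algebra R A] {S : Submodule R A} {T : Set A} {a q : A}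
    (h : ∀ t ∈ T, a * t ∈ S) (hq : q ∈ Submodule.span R T) : a * q ∈ S :=
  (Submodule.span_le (p := S.comap (LinearMap.mulLeft R a))).mpr h hq

namespace DirGraph

variable {K : Type} [Field K] {G : DirGraph}

theorem LPA.mul_mem_of_forall_gen_mul_mem (S : Submodule K (LPA K G))
    (hv : ∀ v, ∀ q ∈ S, Lv K G v * q ∈ S) (he : ∀ e, ∀ q ∈ S, Le K G e * q ∈ S)
    (hg : ∀ e, ∀ q ∈ S, Lg K G e * q ∈ S) (x : LPA K G) : ∀ q ∈ S, x * q ∈ S :=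
  RingQuot.mul_mem_of_forall_ι_mul_mem S (by rintro (v | e | e); exacts [hv v, he e, hg e]) x

theorem Lv_mul_self (v : G.V) : Lv K G v * Lv K G v = Lv K G v := by
  simp only [Lv, ← map_mul]
  exact RingQuot.mkAlgHom_rel K (LeavittRel.vertex_same v)

theorem Lv_mul_Lv_of_ne {v w : G.V} (h : v ≠ w) : Lv K G v * Lv K G w = 0 := by
  simp only [Lv, ← map_mul]
  rw [RingQuot.mkAlgHom_rel K (LeavittRel.vertex_ne v w h), map_zero]

theorem Lv_src_mul_Le (e : G.E) : Lv K G (G.src e) * Le K G e = Le K G e := by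
  simp only [Lv, Le, ← map_mul]
  exact RingQuot.mkAlgHom_rel K (LeavittRel.src_edge e)

theorem Le_mul_Lv_rng (e : G.E) : Le K G e * Lv K G (G.rng e) = Le K G e := by
  simp only [Lv, Le, ← map_mul]
  exact RingQuot.mkAlgHom_rel K (LeavittRel.edge_rng e)

theorem Lv_rng_mul_Lg (e : G.E) : Lv K G (G.rng e) * Lg K G e = Lg K G e := by
  simp only [Lv, Lg, ← map_mul]
  exact RingQuot.mkAlgHom_rel K (LeavittRel.rng_ghost e)

theorem Lg_mul_Lv_src (e : G.E) : Lg K G e * Lv K G (G.src e) = Lg K G e := by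
  simp only [Lv, Lg, ← map_mul]
  exact RingQuot.mkAlgHom_rel K (LeavittRel.ghost_src e)

theorem Lg_mul_Le_self (e : G.E) : Lg K G e * Le K G e = Lv K G (G.rng e) := by
  simp only [Lv, Le, Lg, ← map_mul]
  exact RingQuot.mkAlgHom_rel K (LeavittRel.ghost_edge_same e)

theorem Lg_mul_Le_of_ne {e f : G.E} (h : e ≠ f) : Lg K G e * Le K G f = 0 := by
  simp only [Le, Lg, ← map_mul]
  rw [RingQuot.mkAlgHom_rel K (LeavittRel.ghost_edge_ne e f h), map_zero]

theorem Lv_mul_Le_of_ne {v : G.V} {e : G.E} (h : v ≠ G.src e) : Lv K G v * Le K G e = 0 := by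
  rw [← Lv_src_mul_Le, ← mul_assoc, Lv_mul_Lv_of_ne h, zero_mul]

theorem Le_mul_Lv_of_ne {e : G.E} {w : G.V} (h : G.rng e ≠ w) : Le K G e * Lv K G w = 0 := by
  rw [← Le_mul_Lv_rng, mul_assoc, Lv_mul_Lv_of_ne h, mul_zero]

theorem Lv_mul_Lg_of_ne {v : G.V} {e : G.E} (h : v ≠ G.rng e) : Lv K G v * Lg K G e = 0 := by
  rw [← Lv_rng_mul_Lg, ← mul_assoc, Lv_mul_Lv_of_ne h, zero_mul]

theorem Le_mul_Le_of_ne {e f : G.E} (h : G.rng e ≠ G.src f) : Le K G e * Le K G f = 0 := by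
  rw [← Le_mul_Lv_rng, mul_assoc, Lv_mul_Le_of_ne h, mul_zero]

theorem Lg_mul_Lg_of_ne {e f : G.E} (h : G.src e ≠ G.rng f) : Lg K G e * Lg K G f = 0 := by
  rw [← Lg_mul_Lv_src, mul_assoc, Lv_mul_Lg_of_ne h, mul_zero]

theorem Le_mul_Lg_of_ne {e f : G.E} (h : G.rng e ≠ G.rng f) : Le K G e * Lg K G f = 0 := by
  rw [← Le_mul_Lv_rng, mul_assoc, Lv_mul_Lg_of_ne h, mul_zero]

namespace Clock

-- `Clock` is not reducible, so the relations above do not rewrite terms such as `Lv K Clock none`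
-- (where `none : Option ℕ` rather than `Clock.V`); hence their restatement for `Clock`.

theorem Lv_none_mul_self : Lv K Clock none * Lv K Clock none = Lv K Clock none :=
  Lv_mul_self _

theorem Lv_some_mul_Lv_none (m : ℕ) : Lv K Clock (some m) * Lv K Clock none = 0 :=
  Lv_mul_Lv_of_ne nofun

theorem Le_mul_Lv_none (m : ℕ) : Le K Clock m * Lv K Clock none = 0 :=
  Le_mul_Lv_of_ne nofun

theorem Lg_mul_Lv_none (m : ℕ) : Lg K Clock m * Lv K Clock none = Lg K Clock m :=
  Lg_mul_Lv_src (G := Clock) m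

theorem Lv_none_mul_Le (n : ℕ) : Lv K Clock none * Le K Clock n = Le K Clock n :=
  Lv_src_mul_Le (G := Clock) n

theorem Lv_some_mul_Le (m n : ℕ) : Lv K Clock (some m) * Le K Clock n = 0 :=
  Lv_mul_Le_of_ne nofun

theorem Lv_none_mul_Lg (n : ℕ) : Lv K Clock none * Lg K Clock n = 0 :=
  Lv_mul_Lg_of_ne nofun

theorem Lv_some_mul_Lg_self (n : ℕ) : Lv K Clock (some n) * Lg K Clock n = Lg K Clock n :=
  Lv_rng_mul_Lg (G := Clock) n

theorem Lv_some_mul_Lg_of_ne {m n : ℕ} (h : m ≠ n) : Lv K Clock (some m) * Lg K Clock n = 0 :=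
  Lv_mul_Lg_of_ne (Option.some_injective _ |>.ne h)

theorem Le_mul_Le (m n : ℕ) : Le K Clock m * Le K Clock n = 0 :=
  Le_mul_Le_of_ne nofun

theorem Lg_mul_Lg (m n : ℕ) : Lg K Clock m * Lg K Clock n = 0 :=
  Lg_mul_Lg_of_ne nofun

theorem Le_mul_Lg_of_ne {m n : ℕ} (h : m ≠ n) : Le K Clock m * Lg K Clock n = 0 :=
  DirGraph.Le_mul_Lg_of_ne (Option.some_injective _ |>.ne h)

theorem Lg_mul_Le_self (n : ℕ) : Lg K Clock n * Le K Clock n = Lv K Clock (some n) :=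
  DirGraph.Lg_mul_Le_self (G := Clock) n

theorem Lg_mul_Le_of_ne {m n : ℕ} (h : m ≠ n) : Lg K Clock m * Le K Clock n = 0 :=
  DirGraph.Lg_mul_Le_of_ne h

variable (K) in
/-- The left ideal `L_K(C) v`: the span of the `μ ν*` with `s(ν) = v`. -/
noncomputable def leftIdeal : Submodule K (LPA K Clock) :=
  Submodule.span K ({Lv K Clock none} ∪ (Set.range fun n : ℕ => Lg K Clock n) ∪
    Set.range fun n : ℕ => Le K Clock n * Lg K Clock n)

theorem Lv_none_mem_leftIdeal : Lv K Clock none ∈ leftIdeal K :=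
  Submodule.subset_span (Or.inl (Or.inl rfl))

theorem Lg_mem_leftIdeal (n : ℕ) : Lg K Clock n ∈ leftIdeal K :=
  Submodule.subset_span (Or.inl (Or.inr ⟨n, rfl⟩))

theorem Le_mul_Lg_mem_leftIdeal (n : ℕ) : Le K Clock n * Lg K Clock n ∈ leftIdeal K :=
  Submodule.subset_span (Or.inr ⟨n, rfl⟩)

theorem Lv_mul_mem_leftIdeal (u : Option ℕ) {q : LPA K Clock} (hq : q ∈ leftIdeal K) :
    Lv K Clock u * q ∈ leftIdeal K := by
  refine Submodule.mul_mem_of_forall_mul_mem_of_mem_span ?_ hq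
  rintro _ ((rfl | ⟨n, rfl⟩) | ⟨n, rfl⟩)
  · cases u with
    | none => rw [Lv_none_mul_self]; exact Lv_none_mem_leftIdeal
    | some m => rw [Lv_some_mul_Lv_none]; exact zero_mem _
  · cases u with
    | none => rw [Lv_none_mul_Lg]; exact zero_mem _
    | some m =>
      rcases eq_or_ne m n with rfl | h
      · rw [Lv_some_mul_Lg_self]; exact Lg_mem_leftIdeal m
      · rw [Lv_some_mul_Lg_of_ne h]; exact zero_mem _
  · rw [← mul_assoc]
    cases u with
    | none => rw [Lv_none_mul_Le]; exact Le_mul_Lg_mem_leftIdeal n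
    | some m => rw [Lv_some_mul_Le, zero_mul]; exact zero_mem _

theorem Le_mul_mem_leftIdeal (m : ℕ) {q : LPA K Clock} (hq : q ∈ leftIdeal K) :
    Le K Clock m * q ∈ leftIdeal K := by
  refine Submodule.mul_mem_of_forall_mul_mem_of_mem_span ?_ hq
  rintro _ ((rfl | ⟨n, rfl⟩) | ⟨n, rfl⟩)
  · rw [Le_mul_Lv_none]; exact zero_mem _
  · rcases eq_or_ne m n with rfl | h
    · exact Le_mul_Lg_mem_leftIdeal m
    · rw [Le_mul_Lg_of_ne h]; exact zero_mem _
  · rw [← mul_assoc, Le_mul_Le, zero_mul]; exact zero_mem _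

theorem Lg_mul_mem_leftIdeal (m : ℕ) {q : LPA K Clock} (hq : q ∈ leftIdeal K) :
    Lg K Clock m * q ∈ leftIdeal K := by
  refine Submodule.mul_mem_of_forall_mul_mem_of_mem_span ?_ hq
  rintro _ ((rfl | ⟨n, rfl⟩) | ⟨n, rfl⟩)
  · rw [Lg_mul_Lv_none]; exact Lg_mem_leftIdeal m
  · rw [Lg_mul_Lg]; exact zero_mem _
  · rw [← mul_assoc]
    rcases eq_or_ne m n with rfl | h
    · rw [Lg_mul_Le_self, Lv_some_mul_Lg_self]; exact Lg_mem_leftIdeal m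
    · rw [Lg_mul_Le_of_ne h, zero_mul]; exact zero_mem _

theorem mul_mem_leftIdeal (x : LPA K Clock) {q : LPA K Clock} (hq : q ∈ leftIdeal K) :
    x * q ∈ leftIdeal K :=
  LPA.mul_mem_of_forall_gen_mul_mem (leftIdeal K) (fun u _ => Lv_mul_mem_leftIdeal u)
    (fun m _ => Le_mul_mem_leftIdeal m) (fun m _ => Lg_mul_mem_leftIdeal m) x q hq

theorem Lv_none_mul_mem_span_of_mem_leftIdeal {q : LPA K Clock} (hq : q ∈ leftIdeal K) :
    Lv K Clock none * q ∈ Submodule.span K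
      ({Lv K Clock none} ∪ Set.range fun n : ℕ => Le K Clock n * Lg K Clock n) := by
  refine Submodule.mul_mem_of_forall_mul_mem_of_mem_span ?_ hq
  rintro _ ((rfl | ⟨n, rfl⟩) | ⟨n, rfl⟩)
  · rw [Lv_none_mul_self]; exact Submodule.subset_span (Or.inl rfl)
  · rw [Lv_none_mul_Lg]; exact zero_mem _
  · rw [← mul_assoc, Lv_none_mul_Le]; exact Submodule.subset_span (Or.inr ⟨n, rfl⟩)

theorem Lv_none_mul_mul_Lv_none_of_mem_span {m : LPA K Clock}
    (hm : m ∈ Submodule.span K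
      ({Lv K Clock none} ∪ Set.range fun n : ℕ => Le K Clock n * Lg K Clock n)) :
    Lv K Clock none * m * Lv K Clock none = m := by
  induction hm using Submodule.span_induction with
  | mem x hx =>
    rcases hx with rfl | ⟨n, rfl⟩
    · rw [Lv_none_mul_self, Lv_none_mul_self]
    · rw [← mul_assoc, Lv_none_mul_Le, mul_assoc, Lg_mul_Lv_none]
  | zero => rw [mul_zero, zero_mul]
  | add a b _ _ ha hb => rw [mul_add, add_mul, ha, hb]
  | smul c a _ ha => rw [mul_smul_comm, smul_mul_assoc, ha]

end Clock

end DirGraph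

/-- For the infinite clock graph `C`, the corner `v L_K(C) v` equals the
`K`-linear span of `{v} ∪ {eₙ eₙ* : n ∈ ℕ}`. -/
theorem clock_corner_eq_span (K : Type) [Field K] :
    {y : LPA K Clock | ∃ x : LPA K Clock, y = Lv K Clock none * x * Lv K Clock none} =
      ↑(Submodule.span K
        ({Lv K Clock none} ∪ Set.range fun n : ℕ => Le K Clock n * Lg K Clock n)) := by
  ext y
  constructor
  · rintro ⟨x, rfl⟩
    rw [mul_assoc]
    exact Clock.Lv_none_mul_mem_span_of_mem_leftIdeal
      (Clock.mul_mem_leftIdeal x Clock.Lv_none_mem_leftIdeal)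
  · intro hy
    exact ⟨y, (Clock.Lv_none_mul_mul_Lv_none_of_mem_span hy).symm⟩
end

section
/- Let K be a field and let A = K × (⊕_{n∈ℕ} K) be the unital K-algebra with componentwise addition and multiplication (k, x)·(k', x') = (kk', kx' + k'x + xx') (the unitization of the non-unital algebra ⊕_{n∈ℕ} K with componentwise operations). Then for all natural numbers m and n, the K-algebra K^m × (K[x, x⁻¹])^n (the product of m copies of K and n copies of the Laurent polynomial algebra over K) has only finitely many idempotent elements, while A has infinitely many idempotents; consequently A is not isomorphic as a K-algebra to K^m × (K[x, x⁻¹])^n for any m, n. -/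
/-- Pointwise multiplication on `⊕_{n ∈ ℕ} K` commutes with scalars. -/
instance (K : Type) [Field K] : SMulCommClass K (ℕ →₀ K) (ℕ →₀ K) where
  smul_comm c x y := by
    ext n
    simp only [smul_eq_mul, Finsupp.smul_apply, Finsupp.mul_apply]
    ring

/-- Pointwise multiplication on `⊕_{n ∈ ℕ} K` is compatible with scalars. -/
instance (K : Type) [Field K] : IsScalarTower K (ℕ →₀ K) (ℕ →₀ K) where
  smul_assoc c x y := by
    ext n
    simp only [smul_eq_mul, Finsupp.smul_apply, Finsupp.mul_apply]
    ring

lemma idem_zero_or_one {R : Type*} [Ring R] [NoZeroDivisors R] {a : R}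
    (h : IsIdempotentElem a) : a = 0 ∨ a = 1 := by
  have h0 : a * (a - 1) = 0 := by
    rw [mul_sub, h.eq, mul_one, sub_self]
  rcases mul_eq_zero.mp h0 with h1 | h1
  · exact Or.inl h1
  · exact Or.inr (sub_eq_zero.mp h1)

/-- For every `m, n`, the algebra `K^m × (K[x,x⁻¹])^n` has only finitely
many idempotents, while the unitization `A = K × (⊕_{n ∈ ℕ} K)` (with multiplication
`(k,x)·(k',x') = (kk', kx' + k'x + xx')`) has infinitely many idempotents; consequently
`A` is not isomorphic as a `K`-algebra to any `K^m × (K[x,x⁻¹])^n`. -/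
theorem unitization_not_iso_products (K : Type) [Field K] :
    (∀ m n : ℕ,
      {a : (Fin m → K) × (Fin n → LaurentPolynomial K) | IsIdempotentElem a}.Finite) ∧
    {a : Unitization K (ℕ →₀ K) | IsIdempotentElem a}.Infinite ∧
    (∀ m n : ℕ,
      IsEmpty (Unitization K (ℕ →₀ K) ≃ₐ[K]
        ((Fin m → K) × (Fin n → LaurentPolynomial K)))) := by
  have hfin : ∀ m n : ℕ,
      {a : (Fin m → K) × (Fin n → LaurentPolynomial K) | IsIdempotentElem a}.Finite := by
    intro m n
    have : {a : (Fin m → K) × (Fin n → LaurentPolynomial K) | IsIdempotentElem a} ⊆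
        (Set.pi Set.univ fun _ : Fin m => ({0, 1} : Set K)) ×ˢ
        (Set.pi Set.univ fun _ : Fin n => ({0, 1} : Set (LaurentPolynomial K))) := by
      rintro ⟨f, g⟩ h
      have h1 : f * f = f := congrArg Prod.fst h
      have h2 : g * g = g := congrArg Prod.snd h
      constructor
      · intro i _
        exact idem_zero_or_one (congrFun h1 i)
      · intro i _
        exact idem_zero_or_one (congrFun h2 i)
    exact Set.Finite.subset
      (Set.Finite.prod
        (Set.Finite.pi fun _ => (Set.finite_singleton 1).insert 0)
        (Set.Finite.pi fun _ => (Set.finite_singleton 1).insert 0)) this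
  have hinf : {a : Unitization K (ℕ →₀ K) | IsIdempotentElem a}.Infinite := by
    apply Set.infinite_of_injective_forall_mem
      (f := fun k : ℕ => (Unitization.inr (Finsupp.single k (1 : K)) : Unitization K (ℕ →₀ K)))
    case hi =>
      intro a b hab
      have := Unitization.inr_injective (R := K) hab
      exact Finsupp.single_left_injective one_ne_zero this
    case hf =>
      intro k
      show IsIdempotentElem _
      unfold IsIdempotentElem
      rw [← Unitization.inr_mul]
      congr 1
      ext j
      rw [Finsupp.mul_apply]
      rcases eq_or_ne j k with rfl | hjk
      · simp
      · simp [Finsupp.single_apply, hjk.symm]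
  refine ⟨hfin, hinf, ?_⟩
  intro m n
  constructor
  intro e
  have himg : (e '' {a : Unitization K (ℕ →₀ K) | IsIdempotentElem a}) ⊆
      {a : (Fin m → K) × (Fin n → LaurentPolynomial K) | IsIdempotentElem a} := by
    rintro _ ⟨a, ha, rfl⟩
    show e a * e a = e a
    rw [← map_mul, ha.eq]
  exact ((hfin m n).subset himg).not_infinite (hinf.image e.injective.injOn)
end
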